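/- Constant cumulative posterior standard deviation under an SE-type information-gain bound: assume k(x, x) ≤ 1 for all x ∈ X and that the SE-type information-gain hypothesis holds. Then for every T ∈ ℕ₊ and every sequence x₁, …, x_T ∈ X, ∑_{t=1}^T σ(x_t; X_{t−1}) ≤ T̄_SE + (d+1) (C̃_SE/2)^{−(3d+3)/2} Γ((3d+3)/2), where Γ denotes the Euler Gamma function. -/

import Mathlib

open Matrix

noncomputable section

/-- Gram matrix `K = [k(x_i, x_j)]` of the kernel `k` on the finite family `xs`. -/
def gram {X ι : Type*} [Fintype ι] (k : X → X → ℝ) (xs : ι → X) :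
    Matrix ι ι ℝ := fun i j => k (xs i) (xs j)

/-- Kernel vector `k_t(x) = (k(x₁, x), …, k(x_t, x))`. -/
def kvec {X ι : Type*} [Fintype ι] (k : X → X → ℝ) (xs : ι → X) (x : X) :
    ι → ℝ := fun i => k (xs i) x

/-- Regularized posterior variance `σ²_{λ²}(x; xs) = k(x,x) - k_t(x)ᵀ (K + λ² I)⁻¹ k_t(x)`.
For the empty family this is `k(x,x)`. -/
def postVar {X ι : Type*} [Fintype ι] [DecidableEq ι] (k : X → X → ℝ)
    (xs : ι → X) (lam : ℝ) (x : X) : ℝ :=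
  k x x - kvec k xs x ⬝ᵥ ((gram k xs + lam ^ 2 • (1 : Matrix ι ι ℝ))⁻¹ *ᵥ kvec k xs x)

/-- Noise-free posterior standard deviation `σ(x; xs) = inf_{λ > 0} σ_{λ²}(x; xs)`. -/
def postStd {X ι : Type*} [Fintype ι] [DecidableEq ι] (k : X → X → ℝ)
    (xs : ι → X) (x : X) : ℝ :=
  ⨅ lam : {l : ℝ // 0 < l}, Real.sqrt (postVar k xs lam.1 x)

/-- Maximum information gain `γ_T(λ²) = sup_{x₁,…,x_T} (1/2) ln det (I_T + λ⁻² K_T)`,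
a value in `[0, ∞]`. -/
def mig {X : Type*} (k : X → X → ℝ) (T : ℕ) (lam : ℝ) : ENNReal :=
  ⨆ xs : Fin T → X, ENNReal.ofReal
    ((1 / 2) * Real.log ((1 + (lam ^ 2)⁻¹ • gram k xs).det))

/-- The prefix `X_{t-1} = (x₁, …, x_{t-1})` of a finite sequence (`t` is 0-indexed). -/
def pre {X : Type*} {T : ℕ} (xs : Fin T → X) (t : Fin T) : Fin t.1 → X :=
  fun i => xs ⟨i.1, i.2.trans t.2⟩

/-- Noise-free posterior mean `μ(x; xs) = k_t(x)ᵀ K⁻¹ (f(x₁), …, f(x_t))ᵀ`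
(for the empty family this is `0`). -/
def postMean {X ι : Type*} [Fintype ι] [DecidableEq ι] (k : X → X → ℝ)
    (xs : ι → X) (f : X → ℝ) (x : X) : ℝ :=
  kvec k xs x ⬝ᵥ ((gram k xs)⁻¹ *ᵥ fun i => f (xs i))

/-- Noise-free posterior standard deviation in closed form,
`σ(x; xs) = (k(x,x) - k_t(x)ᵀ K⁻¹ k_t(x))^{1/2}` (for the empty family, `k(x,x)^{1/2}`). -/
def postStdInv {X ι : Type*} [Fintype ι] [DecidableEq ι] (k : X → X → ℝ)
    (xs : ι → X) (x : X) : ℝ :=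
  Real.sqrt (k x x - kvec k xs x ⬝ᵥ ((gram k xs)⁻¹ *ᵥ kvec k xs x))

/-- The first `t` points `X_t = (x₁, …, x_t)` of an infinite sequence. -/
def prefN {X : Type*} (xseq : ℕ → X) (t : ℕ) : Fin t → X := fun i => xseq i


/-!
Call `σ_t` the posterior standard deviation at the `t`-th point. If `N` of the points have
`σ_t ≥ λ`, then along these `N` points every regularized posterior variance is at least `λ²`
(conditioning on fewer points can only increase it), so the chain rule
`det (I + λ⁻² K) = ∏ (1 + σ²_{λ²} / λ²)` gives them information gain at least `(N / 2) ln 2`.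
At `λ = λ_N` the SE hypothesis caps this gain by `N / 6`, so for `N ≥ T̄_SE` fewer than `N` of
the `σ_t` reach `λ_N`: the `N`-th largest `σ_t` is below `λ_N`. Summing,
`∑ σ_t ≤ T̄_SE + ∑_{N > T̄_SE} λ_N`, and since `λ_t` decreases beyond `((d+1)/C̃)^{d+1} ≤ T̄_SE`
the tail is at most `∫₀^∞ t^{1/2} e^{-C̃ t^{1/(d+1)} / 2} dt`, a Gamma integral.
-/

open Finset

def IsPosSemidefKernel {X : Type*} (k : X → X → ℝ) : Prop :=
  (∀ x y, k x y = k y x) ∧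
    ∀ (n : ℕ) (xv : Fin n → X) (c : Fin n → ℝ), 0 ≤ ∑ i, ∑ j, c i * c j * k (xv i) (xv j)

def regGram {X ι : Type*} [Fintype ι] [DecidableEq ι] (k : X → X → ℝ) (xs : ι → X) (lam : ℝ) :
    Matrix ι ι ℝ :=
  gram k xs + lam ^ 2 • (1 : Matrix ι ι ℝ)

section Matrix

variable {ι κ : Type*} [Fintype ι] [Fintype κ]

theorem Matrix.dotProduct_extend_zero {e : ι → κ} (he : Function.Injective e) (u : ι → ℝ)
    (w : κ → ℝ) : Function.extend e u 0 ⬝ᵥ w = u ⬝ᵥ (w ∘ e) := by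
  classical
  rw [dotProduct, ← Finset.sum_subset (Finset.subset_univ (univ.map ⟨e, he⟩)), sum_map]
  · exact sum_congr rfl fun i _ => by simp [he.extend_apply]
  · intro j _ hj
    rw [Function.extend_apply' _ _ _ fun ⟨i, hi⟩ => hj (by simp [← hi]), Pi.zero_apply, zero_mul]

variable [DecidableEq ι] [DecidableEq κ]

theorem Matrix.PosDef.two_mul_dotProduct_sub_le {A : Matrix κ κ ℝ} (hA : A.PosDef)
    (v c : κ → ℝ) : 2 * (c ⬝ᵥ v) - c ⬝ᵥ (A *ᵥ c) ≤ v ⬝ᵥ (A⁻¹ *ᵥ v) := by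
  set u := A⁻¹ *ᵥ v
  have hAu : A *ᵥ u = v := by simp [u, mulVec_mulVec, mul_nonsing_inv _ hA.det_pos.ne'.isUnit]
  have hsymm : u ⬝ᵥ (A *ᵥ c) = c ⬝ᵥ v := by
    rw [dotProduct_mulVec, ← mulVec_transpose, ← conjTranspose_eq_transpose_of_trivial,
      hA.isHermitian.eq, hAu, dotProduct_comm]
  have hsq := hA.posSemidef.dotProduct_mulVec_nonneg (c - u)
  simp only [star_trivial, mulVec_sub, sub_dotProduct, dotProduct_sub, hAu, hsymm] at hsq
  rw [dotProduct_comm v u]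
  linarith

theorem Matrix.PosDef.dotProduct_inv_submatrix_le {A : Matrix κ κ ℝ} (hA : A.PosDef)
    {e : ι → κ} (he : Function.Injective e) (v : κ → ℝ) :
    (v ∘ e) ⬝ᵥ ((A.submatrix e e)⁻¹ *ᵥ (v ∘ e)) ≤ v ⬝ᵥ (A⁻¹ *ᵥ v) := by
  set u := (A.submatrix e e)⁻¹ *ᵥ (v ∘ e)
  have hBu : A.submatrix e e *ᵥ u = v ∘ e := by
    simp [u, mulVec_mulVec, mul_nonsing_inv _ (hA.submatrix he).det_pos.ne'.isUnit]
  have hquad : Function.extend e u 0 ⬝ᵥ (A *ᵥ Function.extend e u 0)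
      = u ⬝ᵥ (A.submatrix e e *ᵥ u) := by
    rw [dotProduct_extend_zero he]
    congr 1
    ext i
    simp only [Function.comp_apply, mulVec, dotProduct_comm (A (e i)), dotProduct_extend_zero he]
    exact dotProduct_comm _ _
  have := hA.two_mul_dotProduct_sub_le v (Function.extend e u 0)
  rw [hquad, dotProduct_extend_zero he, hBu] at this
  rw [dotProduct_comm (v ∘ e)]
  linarith

end Matrix

section Kernel

variable {X ι κ : Type*} [Fintype ι] [Fintype κ] {k : X → X → ℝ}

theorem IsPosSemidefKernel.posSemidef_gram (hk : IsPosSemidefKernel k) (xs : ι → X) :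
    (gram k xs).PosSemidef := by
  have hfin : ∀ {n} (ys : Fin n → X), (gram k ys).PosSemidef := fun ys =>
    .of_dotProduct_mulVec_nonneg (by ext i j; exact hk.1 _ _) fun c => by
      simpa [dotProduct, mulVec, _root_.gram, mul_sum, mul_comm, mul_left_comm] using
        hk.2 _ ys c
  convert (hfin (xs ∘ (Fintype.equivFin ι).symm)).submatrix (Fintype.equivFin ι)
  ext i j
  simp [_root_.gram]

variable [DecidableEq ι] [DecidableEq κ]

theorem IsPosSemidefKernel.posDef_regGram (hk : IsPosSemidefKernel k) (xs : ι → X)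
    {lam : ℝ} (hlam : lam ≠ 0) : (regGram k xs lam).PosDef :=
  PosDef.posSemidef_add (hk.posSemidef_gram xs) (PosDef.one.smul (by positivity))

theorem postVar_eq_regGram (xs : ι → X) (lam : ℝ) (x : X) :
    postVar k xs lam x = k x x - kvec k xs x ⬝ᵥ ((regGram k xs lam)⁻¹ *ᵥ kvec k xs x) :=
  rfl

theorem IsPosSemidefKernel.postVar_le (hk : IsPosSemidefKernel k) (xs : ι → X)
    {lam : ℝ} (hlam : lam ≠ 0) (x : X) : postVar k xs lam x ≤ k x x := by
  have := (hk.posDef_regGram xs hlam).posSemidef.inv.dotProduct_mulVec_nonneg (kvec k xs x)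
  rw [postVar_eq_regGram]
  simp only [star_trivial] at this
  linarith

theorem regGram_comp {e : ι → κ} (he : Function.Injective e) (ys : κ → X) (lam : ℝ) :
    regGram k (ys ∘ e) lam = (regGram k ys lam).submatrix e e := by
  ext i j
  simp [regGram, _root_.gram, one_apply, he.eq_iff]

theorem IsPosSemidefKernel.postVar_le_postVar_comp (hk : IsPosSemidefKernel k)
    {e : ι → κ} (he : Function.Injective e) (ys : κ → X) {lam : ℝ} (hlam : lam ≠ 0) (x : X) :
    postVar k ys lam x ≤ postVar k (ys ∘ e) lam x := by
  have := (hk.posDef_regGram ys hlam).dotProduct_inv_submatrix_le he (kvec k ys x)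
  rw [postVar_eq_regGram, postVar_eq_regGram, regGram_comp he]
  exact sub_le_sub_left this _

theorem IsPosSemidefKernel.det_regGram_sumElim (hk : IsPosSemidefKernel k) (xs : ι → X) (x : X)
    {lam : ℝ} (hlam : lam ≠ 0) :
    (regGram k (Sum.elim xs fun _ : Fin 1 => x) lam).det
      = (regGram k xs lam).det * (lam ^ 2 + postVar k xs lam x) := by
  have := (hk.posDef_regGram xs hlam).isUnit.invertible
  have hblocks : regGram k (Sum.elim xs fun _ : Fin 1 => x) lam
      = fromBlocks (regGram k xs lam) (replicateCol (Fin 1) (kvec k xs x))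
          (replicateRow (Fin 1) (kvec k xs x)) (of fun _ _ => k x x + lam ^ 2) := by
    ext (i | i) (j | j) <;>
      simp [regGram, _root_.gram, kvec, one_apply, hk.1 x, Fin.fin_one_eq_zero]
  rw [hblocks, det_fromBlocks₁₁, det_fin_one, invOf_eq_nonsing_inv, Matrix.mul_assoc,
    ← replicateCol_mulVec, Matrix.sub_apply, replicateRow_mul_replicateCol_apply,
    postVar_eq_regGram, of_apply]
  ring

end Kernel

section Sequential

variable {X : Type*} {k : X → X → ℝ}

theorem IsPosSemidefKernel.det_regGram_succ (hk : IsPosSemidefKernel k) {n : ℕ}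
    (y : Fin (n + 1) → X) {lam : ℝ} (hlam : lam ≠ 0) :
    (regGram k y lam).det
      = (regGram k (Fin.init y) lam).det
        * (lam ^ 2 + postVar k (Fin.init y) lam (y (Fin.last n))) := by
  have hsplit : y ∘ finSumFinEquiv = Sum.elim (Fin.init y) fun _ : Fin 1 => y (Fin.last n) := by
    ext (i | i)
    · rfl
    · rw [Fin.fin_one_eq_zero i]
      rfl
  rw [← det_submatrix_equiv_self finSumFinEquiv, ← regGram_comp finSumFinEquiv.injective, hsplit,
    hk.det_regGram_sumElim _ _ hlam]

theorem IsPosSemidefKernel.det_regGram_eq_prod (hk : IsPosSemidefKernel k) {lam : ℝ}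
    (hlam : lam ≠ 0) {n : ℕ} (y : Fin n → X) :
    (regGram k y lam).det = ∏ j, (lam ^ 2 + postVar k (pre y j) lam (y j)) := by
  induction n with
  | zero => simp
  | succ n ih =>
    rw [hk.det_regGram_succ y hlam, ih, Fin.prod_univ_castSucc]
    rfl

theorem IsPosSemidefKernel.det_one_add_smul_gram_eq_prod (hk : IsPosSemidefKernel k) {lam : ℝ}
    (hlam : lam ≠ 0) {n : ℕ} (y : Fin n → X) :
    (1 + (lam ^ 2)⁻¹ • gram k y).det = ∏ j, (1 + postVar k (pre y j) lam (y j) / lam ^ 2) := by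
  have hlam2 : lam ^ 2 ≠ 0 := pow_ne_zero 2 hlam
  have : 1 + (lam ^ 2)⁻¹ • gram k y = (lam ^ 2)⁻¹ • regGram k y lam := by
    rw [regGram, smul_add, smul_smul, inv_mul_cancel₀ hlam2, one_smul, add_comm]
  rw [this, det_smul, hk.det_regGram_eq_prod hlam, Fintype.card_fin, ← Fin.prod_const n,
    ← prod_mul_distrib]
  refine prod_congr rfl fun j _ => ?_
  field_simp

end Sequential

section PostStd

variable {X ι : Type*} [Fintype ι] [DecidableEq ι] {k : X → X → ℝ}

theorem postStd_le_sqrt_postVar (xs : ι → X) (x : X) {lam : ℝ} (hlam : 0 < lam) :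
    postStd k xs x ≤ √(postVar k xs lam x) :=
  ciInf_le ⟨0, by rintro _ ⟨_, rfl⟩; positivity⟩ (⟨lam, hlam⟩ : {l : ℝ // 0 < l})

theorem IsPosSemidefKernel.postStd_le_sqrt (hk : IsPosSemidefKernel k) (xs : ι → X) (x : X) :
    postStd k xs x ≤ √(k x x) :=
  (postStd_le_sqrt_postVar xs x one_pos).trans (Real.sqrt_le_sqrt (hk.postVar_le xs one_ne_zero x))

theorem sq_le_postVar_of_le_postStd {xs : ι → X} {x : X} {lam : ℝ} (hlam : 0 < lam)
    (h : lam ≤ postStd k xs x) : lam ^ 2 ≤ postVar k xs lam x :=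
  (Real.le_sqrt' hlam).mp (h.trans (postStd_le_sqrt_postVar xs x hlam))

end PostStd

section InformationGain

variable {X : Type*} {k : X → X → ℝ}

theorem IsPosSemidefKernel.postVar_pre_le_postVar_pre_comp (hk : IsPosSemidefKernel k)
    {m T : ℕ} (xs : Fin T → X) {f : Fin m → Fin T} (hf : StrictMono f) (j : Fin m) {lam : ℝ}
    (hlam : lam ≠ 0) (x : X) :
    postVar k (pre xs (f j)) lam x ≤ postVar k (pre (xs ∘ f) j) lam x := by
  let e : Fin j → Fin (f j) := fun i =>
    ⟨f ⟨i, i.2.trans j.2⟩, hf (show (⟨i, _⟩ : Fin m) < j from i.2)⟩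
  have he : Function.Injective e := fun a b hab => by
    have : f ⟨a, a.2.trans j.2⟩ = f ⟨b, b.2.trans j.2⟩ := Fin.ext (Fin.mk.inj hab)
    simpa [Fin.ext_iff] using hf.injective this
  exact hk.postVar_le_postVar_comp he _ hlam x

theorem IsPosSemidefKernel.ofReal_card_mul_log_two_le_mig (hk : IsPosSemidefKernel k) {T : ℕ}
    (xs : Fin T → X) (S : Finset (Fin T)) {lam : ℝ} (hlam : 0 < lam)
    (hS : ∀ t ∈ S, lam ≤ postStd k (pre xs t) (xs t)) :
    ENNReal.ofReal (#S * Real.log 2 / 2) ≤ mig k #S lam := by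
  set f := S.orderEmbOfFin rfl
  have hfactor : ∀ j, 2 ≤ 1 + postVar k (pre (xs ∘ f) j) lam ((xs ∘ f) j) / lam ^ 2 := by
    intro j
    have h := (sq_le_postVar_of_le_postStd hlam (hS _ (S.orderEmbOfFin_mem rfl j))).trans
      (hk.postVar_pre_le_postVar_pre_comp xs f.strictMono j hlam.ne' (xs (f j)))
    have : 1 ≤ postVar k (pre (xs ∘ f) j) lam ((xs ∘ f) j) / lam ^ 2 := by
      rwa [one_le_div (by positivity)]
    linarith
  have hdet : (2 : ℝ) ^ #S ≤ (1 + (lam ^ 2)⁻¹ • gram k (xs ∘ f)).det := by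
    rw [hk.det_one_add_smul_gram_eq_prod hlam.ne']
    simpa using prod_le_prod (s := univ) (fun _ _ => zero_le_two) fun j _ => hfactor j
  refine le_iSup_of_le (xs ∘ f) (ENNReal.ofReal_le_ofReal ?_)
  have := Real.log_le_log (by positivity) hdet
  rw [Real.log_pow] at this
  linarith

end InformationGain

theorem Finset.sum_le_add_sum_Ico_of_card_filter_lt {ι : Type*} [DecidableEq ι] (s : Finset ι)
    {a : ι → ℝ} {F : ℕ → ℝ} {M : ℕ} (ha : ∀ i ∈ s, a i ≤ 1)
    (hF : ∀ N, M ≤ N → #{i ∈ s | F N ≤ a i} < N) :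
    ∑ i ∈ s, a i ≤ M + ∑ n ∈ Ico M #s, F (n + 1) := by
  induction s using Finset.induction_on_min_value a with
  | empty => simp
  | insert i s hi hmin ih =>
    rw [card_insert_of_notMem hi]
    by_cases hsM : #s + 1 ≤ M
    · rw [Ico_eq_empty (by omega), sum_empty, add_zero]
      calc ∑ j ∈ insert i s, a j ≤ #(insert i s) • (1 : ℝ) := sum_le_card_nsmul _ _ _ ha
        _ ≤ M := by rw [card_insert_of_notMem hi, nsmul_one]; exact_mod_cast hsM
    -- `a i` is the smallest value, so if it reached `F (#s + 1)` then all `#s + 1` values would.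
    have hai : a i < F (#s + 1) := by
      by_contra! hge
      have hall : {j ∈ insert i s | F (#s + 1) ≤ a j} = insert i s :=
        filter_true_of_mem fun j hj => (mem_insert.mp hj).elim (· ▸ hge) (hge.trans <| hmin j ·)
      have := hF (#s + 1) (by omega)
      rw [hall, card_insert_of_notMem hi] at this
      exact lt_irrefl _ this
    have ih' := ih (fun j hj => ha j (mem_insert_of_mem hj)) fun N hN =>
      (card_le_card (filter_subset_filter _ (subset_insert i s))).trans_lt (hF N hN)
    rw [sum_insert hi, sum_Ico_succ_top (by omega)]
    linarith

section SquaredExponential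

open Real Set MeasureTheory

/-- `seLambda C̃_SE d t` is the `λ_t` of the SE schedule. -/
def seLambda (c : ℝ) (d : ℕ) (t : ℝ) : ℝ :=
  √(t * exp (-(c * t ^ ((1 : ℝ) / ((d : ℝ) + 1)))))

variable {c : ℝ} {d : ℕ}

theorem seLambda_pos {t : ℝ} (ht : 0 < t) : 0 < seLambda c d t :=
  Real.sqrt_pos.mpr (by positivity)

theorem log_div_seLambda_sq {t : ℝ} (ht : 0 < t) :
    log (t / seLambda c d t ^ 2) = c * t ^ ((1 : ℝ) / ((d : ℝ) + 1)) := by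
  rw [seLambda, sq_sqrt (by positivity), div_mul_cancel_left₀ ht.ne', ← exp_neg, neg_neg,
    log_exp]

theorem seLambda_eq_rpow_mul_exp {t : ℝ} (ht : 0 ≤ t) :
    seLambda c d t = t ^ ((1 : ℝ) / 2) * exp (-(c / 2) * t ^ ((1 : ℝ) / ((d : ℝ) + 1))) := by
  rw [seLambda, sqrt_mul ht, sqrt_eq_rpow, ← exp_half]
  ring_nf

theorem hasDerivAt_mul_exp_neg_mul_rpow {q t : ℝ} (ht : 0 < t) :
    HasDerivAt (fun t : ℝ => t * exp (-(c * t ^ q)))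
      (exp (-(c * t ^ q)) * (1 - c * q * t ^ q)) t := by
  have h := (hasDerivAt_id t).mul ((((hasDerivAt_rpow_const (p := q) (Or.inl ht.ne')).const_mul
    c).neg).exp)
  refine h.congr_deriv ?_
  rw [rpow_sub_one ht.ne']
  simp only [id, Pi.neg_apply]
  field_simp
  ring

theorem antitoneOn_seLambda (hc : 0 < c) (d : ℕ) :
    AntitoneOn (seLambda c d) (Ici ((((d : ℝ) + 1) / c) ^ (d + 1))) := by
  set t₀ := (((d : ℝ) + 1) / c) ^ (d + 1)
  have ht₀ : 0 < t₀ := by positivity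
  have hpos : ∀ t ∈ Ici t₀, 0 < t := fun t ht => ht₀.trans_le ht
  suffices AntitoneOn (fun t : ℝ => t * exp (-(c * t ^ ((1 : ℝ) / ((d : ℝ) + 1))))) (Ici t₀) from
    fun s hs t ht hst => sqrt_le_sqrt (this hs ht hst)
  refine antitoneOn_of_deriv_nonpos (convex_Ici _)
    (fun t ht => (hasDerivAt_mul_exp_neg_mul_rpow (hpos t ht)).continuousAt.continuousWithinAt)
    (fun t ht => (hasDerivAt_mul_exp_neg_mul_rpow
      (hpos t (interior_subset ht))).differentiableAt.differentiableWithinAt) fun t ht => ?_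
  have hle : t₀ ≤ t := interior_subset ht
  rw [(hasDerivAt_mul_exp_neg_mul_rpow (hpos t hle)).deriv]
  have hroot : ((d : ℝ) + 1) / c ≤ t ^ ((1 : ℝ) / ((d : ℝ) + 1)) := by
    calc ((d : ℝ) + 1) / c = t₀ ^ ((1 : ℝ) / ((d : ℝ) + 1)) := by
          simp only [t₀]
          rw [← rpow_natCast, ← rpow_mul (by positivity), Nat.cast_succ,
            mul_one_div_cancel (by positivity), rpow_one]
      _ ≤ _ := rpow_le_rpow ht₀.le hle (by positivity)
  have : 1 ≤ c * (1 / ((d : ℝ) + 1)) * t ^ ((1 : ℝ) / ((d : ℝ) + 1)) := by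
    rw [div_le_iff₀ hc] at hroot
    field_simp
    linarith
  exact mul_nonpos_of_nonneg_of_nonpos (exp_pos _).le (by linarith)

theorem integral_seLambda (hc : 0 < c) (d : ℕ) :
    ∫ t in Ioi 0, seLambda c d t
      = ((d : ℝ) + 1) * (c / 2) ^ (-(3 * (d : ℝ) + 3) / 2) * Gamma ((3 * (d : ℝ) + 3) / 2) := by
  rw [setIntegral_congr_fun measurableSet_Ioi fun t ht => seLambda_eq_rpow_mul_exp (le_of_lt ht),
    integral_rpow_mul_exp_neg_mul_rpow (by positivity) (by norm_num) (by positivity)]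
  rw [show ((1 : ℝ) / 2 + 1) / (1 / ((d : ℝ) + 1)) = (3 * d + 3) / 2 by field_simp; ring,
    show -((1 : ℝ) / 2 + 1) / (1 / ((d : ℝ) + 1)) = -(3 * d + 3) / 2 by field_simp; ring,
    one_div_one_div]
  ring

theorem integrableOn_seLambda (hc : 0 < c) (d : ℕ) : IntegrableOn (seLambda c d) (Ioi 0) :=
  Integrable.of_integral_ne_zero <| by
    rw [integral_seLambda hc]
    have := Gamma_pos_of_pos (show 0 < (3 * (d : ℝ) + 3) / 2 by positivity)
    positivity

theorem sum_Ico_seLambda_le (hc : 0 < c) {M T : ℕ}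
    (hM : (((d : ℝ) + 1) / c) ^ (d + 1) ≤ M) :
    ∑ n ∈ Ico M T, seLambda c d (n + 1 : ℕ)
      ≤ ((d : ℝ) + 1) * (c / 2) ^ (-(3 * (d : ℝ) + 3) / 2) * Gamma ((3 * (d : ℝ) + 3) / 2) := by
  rw [← integral_seLambda hc d]
  rcases le_or_gt M T with hMT | hTM
  · refine ((antitoneOn_seLambda hc d).mono fun t ht => hM.trans ht.1).sum_le_integral_Ico hMT
      |>.trans ?_
    rw [intervalIntegral.integral_of_le (by exact_mod_cast hMT)]
    exact setIntegral_mono_set (integrableOn_seLambda hc d)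
      (ae_of_all _ fun _ => sqrt_nonneg _)
      (Set.Ioc_subset_Ioi_self.trans (Ioi_subset_Ioi (Nat.cast_nonneg M))).eventuallyLE
  · rw [Finset.Ico_eq_empty_of_le hTM.le, sum_empty]
    exact setIntegral_nonneg measurableSet_Ioi fun _ _ => sqrt_nonneg _

end SquaredExponential

theorem IsPosSemidefKernel.card_lt_of_seLambda_le_postStd {X : Type*} {k : X → X → ℝ}
    (hk : IsPosSemidefKernel k) {CSE lamBar : ℝ} (hCSE : 0 < CSE) {T0 d : ℕ}
    (hgain : ∀ lam : ℝ, 0 < lam → lam ≤ lamBar → ∀ t : ℕ, T0 ≤ t →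
      mig k t lam ≤ ENNReal.ofReal (CSE * Real.log ((t : ℝ) / lam ^ 2) ^ (d + 1)))
    {Ctil : ℝ} (hCtil : Ctil = (6 * CSE) ^ (-(1 : ℝ) / ((d : ℝ) + 1)))
    {N : ℕ} (hN : 0 < N) (hT0N : T0 ≤ N) (hlamN : seLambda Ctil d N ≤ lamBar)
    {T : ℕ} (xs : Fin T → X) (S : Finset (Fin T))
    (hS : ∀ t ∈ S, seLambda Ctil d N ≤ postStd k (pre xs t) (xs t)) :
    #S < N := by
  by_contra! hNS
  obtain ⟨S', hS'S, hcard⟩ := exists_subset_card_eq hNS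
  have hN' : (0 : ℝ) < N := by exact_mod_cast hN
  have hlam := seLambda_pos (c := Ctil) (d := d) hN'
  have lower := hk.ofReal_card_mul_log_two_le_mig xs S' hlam fun t ht => hS t (hS'S ht)
  have upper := hgain _ hlam hlamN N hT0N
  -- `CSE * Ctil ^ (d + 1) = 1 / 6`, while the lower bound has the larger slope `log 2 / 2`
  have hgainN : CSE * Real.log ((N : ℝ) / seLambda Ctil d N ^ 2) ^ (d + 1) = N / 6 := by
    rw [log_div_seLambda_sq hN', mul_pow, ← Real.rpow_natCast, ← Real.rpow_natCast (_ ^ _),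
      ← Real.rpow_mul hN'.le, hCtil, ← Real.rpow_mul (by positivity), Nat.cast_succ,
      div_mul_cancel₀ _ (by positivity), one_div_mul_cancel (by positivity), Real.rpow_one,
      Real.rpow_neg_one]
    field_simp
  rw [hcard] at lower
  rw [hgainN] at upper
  have := (ENNReal.ofReal_le_ofReal_iff (by positivity)).mp (lower.trans upper)
  nlinarith [Real.log_two_gt_d9]

theorem sum_postStd_se_general
{X : Type*} (k : X → X → ℝ)
    (hsym : ∀ x y : X, k x y = k y x)
    (hpsd : ∀ (n : ℕ) (xv : Fin n → X) (c : Fin n → ℝ),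
      0 ≤ ∑ i, ∑ j, c i * c j * k (xv i) (xv j))
    (hk1 : ∀ x : X, k x x ≤ 1)
    (CSE lamBar : ℝ) (hCSE : 0 < CSE) (hlamBar : 0 < lamBar)
    (T0 : ℕ) (d : ℕ)
    (hgain : ∀ lam : ℝ, 0 < lam → lam ≤ lamBar → ∀ t : ℕ, T0 ≤ t →
      mig k t lam ≤ ENNReal.ofReal (CSE * Real.log ((t : ℝ) / lam ^ 2) ^ (d + 1)))
    (Ctil : ℝ) (hCtil : Ctil = (6 * CSE) ^ (-(1 : ℝ) / ((d : ℝ) + 1)))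
    (Tlam : ℕ) (hTlam : ∀ t : ℕ, Tlam ≤ t →
      (t : ℝ) * Real.exp (-(Ctil * (t : ℝ) ^ ((1 : ℝ) / ((d : ℝ) + 1)))) ≤ lamBar ^ 2)
    (TSE : ℕ)
    (hTSE : TSE = max T0 (max Tlam
      (⌈((d : ℝ) + 1) ^ (d + 1) / Ctil ^ (d + 1)⌉₊ + 1))) :
    ∀ T : ℕ, 0 < T → ∀ xs : Fin T → X,
      ∑ t : Fin T, postStd k (pre xs t) (xs t) ≤
        (TSE : ℝ) + ((d : ℝ) + 1) * (Ctil / 2) ^ (-(3 * (d : ℝ) + 3) / 2) *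
          Real.Gamma ((3 * (d : ℝ) + 3) / 2) := by
  intro T _ xs
  have hk : IsPosSemidefKernel k := ⟨hsym, hpsd⟩
  have hCtil0 : 0 < Ctil := hCtil ▸ Real.rpow_pos_of_pos (by positivity) _
  have hthreshold : (((d : ℝ) + 1) / Ctil) ^ (d + 1) ≤ TSE := by
    have : ⌈((d : ℝ) + 1) ^ (d + 1) / Ctil ^ (d + 1)⌉₊ ≤ TSE := by omega
    rw [div_pow]
    exact (Nat.le_ceil _).trans (by exact_mod_cast this)
  have hcount : ∀ N, TSE ≤ N → #{t | seLambda Ctil d N ≤ postStd k (pre xs t) (xs t)} < N :=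
    fun N hN => hk.card_lt_of_seLambda_le_postStd hCSE hgain hCtil (by omega) (by omega)
      ((Real.sqrt_le_sqrt (hTlam N (by omega))).trans_eq (Real.sqrt_sq hlamBar.le)) xs _
      fun t ht => (mem_filter.mp ht).2
  have hle_one : ∀ t ∈ univ, postStd k (pre xs t) (xs t) ≤ 1 := fun t _ =>
    (hk.postStd_le_sqrt _ _).trans (Real.sqrt_le_one.mpr (hk1 _))
  calc ∑ t, postStd k (pre xs t) (xs t)
      ≤ TSE + ∑ n ∈ Ico TSE #(univ : Finset (Fin T)), seLambda Ctil d (n + 1 : ℕ) :=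
        sum_le_add_sum_Ico_of_card_filter_lt univ hle_one hcount
    _ ≤ _ := by grw [sum_Ico_seLambda_le hCtil0 hthreshold]

/-- Constant cumulative posterior standard deviation under an SE-type
information-gain bound. -/
theorem sum_postStd_se
{X : Type*} [Nonempty X] (k : X → X → ℝ)
    (hsym : ∀ x y : X, k x y = k y x)
    (hpsd : ∀ (n : ℕ) (xv : Fin n → X) (c : Fin n → ℝ),
      0 ≤ ∑ i, ∑ j, c i * c j * k (xv i) (xv j))
    (hk1 : ∀ x : X, k x x ≤ 1)
    (CSE lamBar : ℝ) (hCSE : 0 < CSE) (hlamBar : 0 < lamBar)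
    (T0 : ℕ) (hT0 : 2 ≤ T0) (d : ℕ) (hd : 1 ≤ d)
    (hgain : ∀ lam : ℝ, 0 < lam → lam ≤ lamBar → ∀ t : ℕ, T0 ≤ t →
      mig k t lam ≤ ENNReal.ofReal (CSE * Real.log ((t : ℝ) / lam ^ 2) ^ (d + 1)))
    (Ctil : ℝ) (hCtil : Ctil = (6 * CSE) ^ (-(1 : ℝ) / ((d : ℝ) + 1)))
    (Tlam : ℕ) (hTlam : ∀ t : ℕ, Tlam ≤ t →
      (t : ℝ) * Real.exp (-(Ctil * (t : ℝ) ^ ((1 : ℝ) / ((d : ℝ) + 1)))) ≤ lamBar ^ 2)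
    (TSE : ℕ)
    (hTSE : TSE = max T0 (max Tlam
      (⌈((d : ℝ) + 1) ^ (d + 1) / Ctil ^ (d + 1)⌉₊ + 1))) :
    ∀ T : ℕ, 0 < T → ∀ xs : Fin T → X,
      ∑ t : Fin T, postStd k (pre xs t) (xs t) ≤
        (TSE : ℝ) + ((d : ℝ) + 1) * (Ctil / 2) ^ (-(3 * (d : ℝ) + 3) / 2) *
          Real.Gamma ((3 * (d : ℝ) + 3) / 2) :=
  sum_postStd_se_general k hsym hpsd hk1 CSE lamBar hCSE hlamBar T0 d hgain Ctil hCtil Tlam hTlam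
    TSE hTSE
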